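/- For a fixed denominator-positivity domain, the uniform rational approximation error is a quasiconvex function of the coefficients: on a finite grid X = {x_1,...,x_N}, with basis functions given by monomials up to degrees m (numerator) and n (denominator), the function F(a, b) = max_i |f(x_i) − p_a(x_i)/q_b(x_i)|, restricted to the convex set of coefficients (a,b) with q_b(x_i) > 0 for all i, is quasiconvex; equivalently, all sublevel sets {(a,b) : F(a,b) ≤ t} are convex. -/

import Mathlib

/-!
Where the denominator `q` is positive, `|f - p / q| ≤ t` is equivalent to the two linear
inequalities `±(f q - p) ≤ t q` in the coefficients, so each sublevel set of each pointwise
error is convex; a finite maximum of quasiconvex functions is quasiconvex.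
-/

open Finset

theorem QuasiconvexOn.finset_sup' {𝕜 E ι β : Type*} [Semiring 𝕜] [PartialOrder 𝕜]
    [AddCommMonoid E] [SMul 𝕜 E] [SemilatticeSup β] {s : Set E} {t : Finset ι}
    (ht : t.Nonempty) {f : ι → E → β} (hf : ∀ i ∈ t, QuasiconvexOn 𝕜 s (f i)) :
    QuasiconvexOn 𝕜 s (fun x => t.sup' ht (f · x)) := by
  intro r x ⟨hx, hxr⟩ y ⟨hy, hyr⟩ a b ha hb hab
  simp only [sup'_le_iff] at hxr hyr
  have hcomb : ∀ i ∈ t, a • x + b • y ∈ {z ∈ s | f i z ≤ r} := fun i hi =>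
    hf i hi r ⟨hx, hxr i hi⟩ ⟨hy, hyr i hi⟩ ha hb hab
  obtain ⟨i, hi⟩ := ht
  exact ⟨(hcomb i hi).1, sup'_le _ _ fun j hj => (hcomb j hj).2⟩

theorem abs_sub_div_le_iff {𝕜 : Type*} [Field 𝕜] [LinearOrder 𝕜] [IsStrictOrderedRing 𝕜]
    {c p q r : 𝕜} (hq : 0 < q) : |c - p / q| ≤ r ↔ |c * q - p| ≤ r * q := by
  rw [← div_le_iff₀ hq, ← abs_of_pos hq, ← abs_div, abs_of_pos hq, sub_div,
    mul_div_cancel_right₀ _ hq.ne']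

theorem convex_setOf_abs_le {𝕜 E : Type*} [Field 𝕜] [LinearOrder 𝕜] [IsStrictOrderedRing 𝕜]
    [AddCommGroup E] [Module 𝕜 E] (L M : E →ₗ[𝕜] 𝕜) : Convex 𝕜 {u | |L u| ≤ M u} := by
  have hset : {u | |L u| ≤ M u} = {u | (L - M) u ≤ 0} ∩ {u | (-L - M) u ≤ 0} := by
    ext u
    simp only [Set.mem_ofPred_eq, Set.mem_inter_iff, LinearMap.sub_apply, LinearMap.neg_apply,
      sub_nonpos, abs_le]
    constructor <;> rintro ⟨h₁, h₂⟩ <;> constructor <;> linarith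
  rw [hset]
  exact (convex_halfSpace_le (L - M).isLinear 0).inter (convex_halfSpace_le (-L - M).isLinear 0)

theorem quasiconvexOn_abs_sub_div {𝕜 E : Type*} [Field 𝕜] [LinearOrder 𝕜]
    [IsStrictOrderedRing 𝕜] [AddCommGroup E] [Module 𝕜 E] (c : 𝕜) (P Q : E →ₗ[𝕜] 𝕜) :
    QuasiconvexOn 𝕜 {u | 0 < Q u} (fun u => |c - P u / Q u|) := by
  intro r
  have hset : {u ∈ {u | 0 < Q u} | |c - P u / Q u| ≤ r}
      = {u | 0 < Q u} ∩ {u | |(c • Q - P) u| ≤ (r • Q) u} := by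
    ext u
    simp only [Set.mem_ofPred_eq, Set.mem_inter_iff, LinearMap.sub_apply, LinearMap.smul_apply,
      smul_eq_mul]
    exact and_congr_right fun hu => by rw [abs_sub_div_le_iff hu, mul_comm c]
  rw [hset]
  exact (convex_halfSpace_gt Q.isLinear 0).inter (convex_setOf_abs_le _ _)

theorem uniform_rational_error_quasiconvex
    (m n N : ℕ) (hN : 0 < N) (x f : Fin N → ℝ) :
    QuasiconvexOn ℝ
      {ab : (Fin (m+1) → ℝ) × (Fin (n+1) → ℝ) |
        ∀ i, 0 < ∑ k, ab.2 k * x i ^ (k : ℕ)}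
      (fun ab =>
        (Finset.univ.sup' (Finset.univ_nonempty_iff.mpr ⟨⟨0, hN⟩⟩)
          (fun i : Fin N =>
            |f i - (∑ k, ab.1 k * x i ^ (k : ℕ)) / (∑ k, ab.2 k * x i ^ (k : ℕ))|))) := by
  -- `evalNum i ab` and `evalDen i ab` unfold definitionally to the coefficient sums above.
  let evalNum : Fin N → (Fin (m+1) → ℝ) × (Fin (n+1) → ℝ) →ₗ[ℝ] ℝ := fun i =>
    (Fintype.linearCombination ℝ fun k : Fin (m+1) => x i ^ (k : ℕ)).comp (LinearMap.fst ℝ _ _)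
  let evalDen : Fin N → (Fin (m+1) → ℝ) × (Fin (n+1) → ℝ) →ₗ[ℝ] ℝ := fun i =>
    (Fintype.linearCombination ℝ fun k : Fin (n+1) => x i ^ (k : ℕ)).comp (LinearMap.snd ℝ _ _)
  have hD : Convex ℝ {ab : (Fin (m+1) → ℝ) × (Fin (n+1) → ℝ) |
      ∀ i, 0 < ∑ k, ab.2 k * x i ^ (k : ℕ)} := by
    rw [Set.ofPred_forall]
    exact convex_iInter fun i => convex_halfSpace_gt (evalDen i).isLinear 0
  refine QuasiconvexOn.finset_sup' _ fun i _ => ?_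
  exact hD.quasiconvexOn_restrict (quasiconvexOn_abs_sub_div (f i) (evalNum i) (evalDen i))
    fun ab hab => hab i
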